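/- arXiv:1810.06974 — 4 statements merged into one kernel-verified Lean document; each statement's English description precedes it below -/
import Mathlib

section
/- Along solutions of the observer error dynamics initialized with x̃(0) = ỹ(0) = 0 and (Ṽx(0), Ṽy(0)) = (Vx, Vy) with Vx² + Vy² ≤ V_max², the current-estimation error satisfies ‖(Ṽx(t), Ṽy(t))‖ ≤ √(max(k_{x2},k_{y2})/min(k_{x2},k_{y2})) · V_max for all t ≥ 0. In particular, if k_{x2} = k_{y2} then ‖(Ṽx(t), Ṽy(t))‖ ≤ V_max for all t ≥ 0. -/
open Real

/-!
The weighted energy `W = x̃² + ỹ² + Ṽx²/k_{x2} + Ṽy²/k_{y2}` has derivative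
`-2 k_{x1} x̃² - 2 k_{y1} ỹ² ≤ 0`, the cross terms `2 x̃ Ṽx` cancelling against the integrator
terms. Squeezing `W` between `‖Ṽ‖² / max k₂` and, at time `0` where the position errors
vanish, `‖Ṽ(0)‖² / min k₂` gives `‖Ṽ(t)‖² ≤ (max k₂ / min k₂) ‖Ṽ(0)‖²`.
-/

theorem add_div_max_le_div_add_div {a b p q : ℝ} (ha : 0 ≤ a) (hb : 0 ≤ b)
    (hp : 0 < p) (hq : 0 < q) : (a + b) / max p q ≤ a / p + b / q := by
  rw [add_div]
  gcongr
  exacts [le_max_left p q, le_max_right p q]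

theorem div_add_div_le_add_div_min {a b p q : ℝ} (ha : 0 ≤ a) (hb : 0 ≤ b)
    (hp : 0 < p) (hq : 0 < q) : a / p + b / q ≤ (a + b) / min p q := by
  have hm : 0 < min p q := lt_min hp hq
  rw [add_div]
  gcongr
  exacts [min_le_left p q, min_le_right p q]

section ObserverError

variable {kx1 kx2 ky1 ky2 : ℝ} {x y vx vy : ℝ → ℝ}

noncomputable def observerLyapunov (kx2 ky2 : ℝ) (x y vx vy : ℝ → ℝ) (t : ℝ) : ℝ :=
  x t ^ 2 + y t ^ 2 + vx t ^ 2 / kx2 + vy t ^ 2 / ky2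

theorem hasDerivAt_observerLyapunov (hkx2 : kx2 ≠ 0) (hky2 : ky2 ≠ 0) {t : ℝ}
    (hx : HasDerivAt x (-kx1 * x t + vx t) t) (hy : HasDerivAt y (-ky1 * y t + vy t) t)
    (hvx : HasDerivAt vx (-kx2 * x t) t) (hvy : HasDerivAt vy (-ky2 * y t) t) :
    HasDerivAt (observerLyapunov kx2 ky2 x y vx vy)
      (-2 * kx1 * x t ^ 2 - 2 * ky1 * y t ^ 2) t := by
  have h := (((hx.pow 2).add (hy.pow 2)).add ((hvx.pow 2).div_const kx2)).add
    ((hvy.pow 2).div_const ky2)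
  refine h.congr_deriv ?_
  field_simp
  ring

theorem antitone_observerLyapunov (hkx1 : 0 ≤ kx1) (hky1 : 0 ≤ ky1)
    (hkx2 : kx2 ≠ 0) (hky2 : ky2 ≠ 0)
    (hx : ∀ t, HasDerivAt x (-kx1 * x t + vx t) t)
    (hy : ∀ t, HasDerivAt y (-ky1 * y t + vy t) t)
    (hvx : ∀ t, HasDerivAt vx (-kx2 * x t) t) (hvy : ∀ t, HasDerivAt vy (-ky2 * y t) t) :
    Antitone (observerLyapunov kx2 ky2 x y vx vy) :=
  antitone_of_hasDerivAt_nonpos (f' := fun t ↦ -2 * kx1 * x t ^ 2 - 2 * ky1 * y t ^ 2)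
    (fun t ↦ hasDerivAt_observerLyapunov hkx2 hky2 (hx t) (hy t) (hvx t) (hvy t))
    fun t ↦ by simp only [Pi.zero_apply]; nlinarith [sq_nonneg (x t), sq_nonneg (y t)]

theorem sq_add_sq_le_observerLyapunov (hkx2 : 0 < kx2) (hky2 : 0 < ky2) (t : ℝ) :
    (vx t ^ 2 + vy t ^ 2) / max kx2 ky2 ≤ observerLyapunov kx2 ky2 x y vx vy t := by
  have := add_div_max_le_div_add_div (sq_nonneg (vx t)) (sq_nonneg (vy t)) hkx2 hky2
  unfold observerLyapunov
  linarith [sq_nonneg (x t), sq_nonneg (y t)]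

theorem observerLyapunov_le_of_eq_zero (hkx2 : 0 < kx2) (hky2 : 0 < ky2) {t : ℝ}
    (hxt : x t = 0) (hyt : y t = 0) :
    observerLyapunov kx2 ky2 x y vx vy t ≤ (vx t ^ 2 + vy t ^ 2) / min kx2 ky2 := by
  simpa [observerLyapunov, hxt, hyt] using
    div_add_div_le_add_div_min (sq_nonneg (vx t)) (sq_nonneg (vy t)) hkx2 hky2

theorem observer_current_error_sq_le (hkx1 : 0 ≤ kx1) (hky1 : 0 ≤ ky1)
    (hkx2 : 0 < kx2) (hky2 : 0 < ky2)
    (hx : ∀ t, HasDerivAt x (-kx1 * x t + vx t) t)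
    (hy : ∀ t, HasDerivAt y (-ky1 * y t + vy t) t)
    (hvx : ∀ t, HasDerivAt vx (-kx2 * x t) t) (hvy : ∀ t, HasDerivAt vy (-ky2 * y t) t)
    (hx0 : x 0 = 0) (hy0 : y 0 = 0) {t : ℝ} (ht : 0 ≤ t) :
    vx t ^ 2 + vy t ^ 2 ≤ max kx2 ky2 / min kx2 ky2 * (vx 0 ^ 2 + vy 0 ^ 2) := by
  have hM : 0 < max kx2 ky2 := lt_max_of_lt_left hkx2
  have hm : 0 < min kx2 ky2 := lt_min hkx2 hky2
  have hW : (vx t ^ 2 + vy t ^ 2) / max kx2 ky2 ≤ (vx 0 ^ 2 + vy 0 ^ 2) / min kx2 ky2 :=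
    calc (vx t ^ 2 + vy t ^ 2) / max kx2 ky2
        ≤ observerLyapunov kx2 ky2 x y vx vy t := sq_add_sq_le_observerLyapunov hkx2 hky2 t
      _ ≤ observerLyapunov kx2 ky2 x y vx vy 0 :=
        antitone_observerLyapunov hkx1 hky1 hkx2.ne' hky2.ne' hx hy hvx hvy ht
      _ ≤ (vx 0 ^ 2 + vy 0 ^ 2) / min kx2 ky2 :=
        observerLyapunov_le_of_eq_zero hkx2 hky2 hx0 hy0
  rw [div_le_div_iff₀ hM hm] at hW
  rw [div_mul_eq_mul_div, le_div_iff₀ hm]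
  linarith

end ObserverError

/-- With zero initial position errors and initial current errors equal to the true current,
the current estimation error stays bounded by √(max/min of gains) · V_max. -/
theorem stmt_3 (kx1 kx2 ky1 ky2 Vx Vy Vmax : ℝ)
    (hkx1 : 0 < kx1) (hkx2 : 0 < kx2) (hky1 : 0 < ky1) (hky2 : 0 < ky2)
    (hV : Vx^2 + Vy^2 ≤ Vmax^2) (hVmax : 0 ≤ Vmax)
    (x y vx vy : ℝ → ℝ)
    (hx : ∀ t : ℝ, HasDerivAt x (-kx1 * x t + vx t) t)
    (hy : ∀ t : ℝ, HasDerivAt y (-ky1 * y t + vy t) t)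
    (hvx : ∀ t : ℝ, HasDerivAt vx (-kx2 * x t) t)
    (hvy : ∀ t : ℝ, HasDerivAt vy (-ky2 * y t) t)
    (hx0 : x 0 = 0) (hy0 : y 0 = 0) (hvx0 : vx 0 = Vx) (hvy0 : vy 0 = Vy) :
    (∀ t : ℝ, 0 ≤ t →
      Real.sqrt ((vx t)^2 + (vy t)^2) ≤
        Real.sqrt (max kx2 ky2 / min kx2 ky2) * Vmax) ∧
    (kx2 = ky2 → ∀ t : ℝ, 0 ≤ t →
      Real.sqrt ((vx t)^2 + (vy t)^2) ≤ Vmax) := by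
  have bound : ∀ t : ℝ, 0 ≤ t →
      Real.sqrt ((vx t)^2 + (vy t)^2) ≤ Real.sqrt (max kx2 ky2 / min kx2 ky2) * Vmax := by
    intro t ht
    have hsq := observer_current_error_sq_le hkx1.le hky1.le hkx2 hky2 hx hy hvx hvy hx0 hy0 ht
    rw [hvx0, hvy0] at hsq
    calc Real.sqrt ((vx t)^2 + (vy t)^2)
        ≤ Real.sqrt (max kx2 ky2 / min kx2 ky2 * Vmax ^ 2) :=
          Real.sqrt_le_sqrt (hsq.trans (by gcongr))
      _ = Real.sqrt (max kx2 ky2 / min kx2 ky2) * Vmax := by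
          rw [Real.sqrt_mul (by positivity), Real.sqrt_sq hVmax]
  refine ⟨bound, fun hk t ht ↦ ?_⟩
  simpa [hk, hky2.ne'] using bound t ht
end

section
/- Let u, V̂_N, Δ, y be real numbers with u > 0, Δ > 0, and u² - V̂_N² > 0. Set a = -(u² - V̂_N²), b = y V̂_N, c = Δ² + y². Then b² - a c ≥ 0 and the number g = V̂_N · (b + √(b² - ac))/(-a) satisfies u · g / √(Δ² + (y + g)²) = V̂_N. Moreover g has the same sign as V̂_N (g = 0 iff V̂_N = 0, g > 0 if V̂_N > 0, g < 0 if V̂_N < 0). -/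
open Real

/-!
For `a < 0 < c` the number `t = (b + √(b² - ac)) / (-a)` is the positive root of
`a t² + 2 b t + c = 0`, and `g = V̂_N t`. With `a = -(u² - V̂_N²)`, `b = y V̂_N`, `c = Δ² + y²`
that quadratic says exactly `Δ² + (y + V̂_N t)² = (u t)²`, so the square root in the guidance law
equals `u t` and `u g / (u t) = V̂_N`. The sign claims follow from `t > 0`.
-/

section QuadraticRoot

variable {a b c : ℝ}

noncomputable def posRoot (a b c : ℝ) : ℝ := (b + √(b ^ 2 - a * c)) / (-a)

theorem discrim_nonneg_of_mul_nonpos (hac : a * c ≤ 0) : 0 ≤ b ^ 2 - a * c := by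
  nlinarith [sq_nonneg b]

theorem posRoot_pos (ha : a < 0) (hc : 0 < c) : 0 < posRoot a b c := by
  have hac : 0 < -(a * c) := by nlinarith
  have hlt : |b| < √(b ^ 2 - a * c) := by
    rw [← sqrt_sq_eq_abs]
    exact sqrt_lt_sqrt (sq_nonneg b) (by linarith)
  exact div_pos (by linarith [neg_abs_le b]) (neg_pos.mpr ha)

theorem posRoot_isRoot (ha : a ≠ 0) (hd : 0 ≤ b ^ 2 - a * c) :
    a * posRoot a b c ^ 2 + 2 * b * posRoot a b c + c = 0 := by
  have hs := sq_sqrt hd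
  unfold posRoot
  field_simp
  linear_combination hs

end QuadraticRoot

theorem mul_div_sqrt_eq_of_quadratic {u V Δ y t : ℝ} (hu : 0 < u) (ht : 0 < t)
    (hroot : -(u ^ 2 - V ^ 2) * t ^ 2 + 2 * (y * V) * t + (Δ ^ 2 + y ^ 2) = 0) :
    u * (V * t) / √(Δ ^ 2 + (y + V * t) ^ 2) = V := by
  have hsq : Δ ^ 2 + (y + V * t) ^ 2 = (u * t) ^ 2 := by linear_combination hroot
  rw [hsq, sqrt_sq (mul_pos hu ht).le]
  field_simp

/-- The guidance offset g exactly compensates the normal current component and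
has the same sign as V̂_N. -/
theorem stmt_6 (u VN Δ y : ℝ) (hu : 0 < u) (hΔ : 0 < Δ) (hV : VN^2 < u^2) :
    let a : ℝ := -(u^2 - VN^2)
    let b : ℝ := y * VN
    let c : ℝ := Δ^2 + y^2
    let g : ℝ := VN * ((b + Real.sqrt (b^2 - a*c)) / (-a))
    0 ≤ b^2 - a*c ∧
    u * g / Real.sqrt (Δ^2 + (y + g)^2) = VN ∧
    (g = 0 ↔ VN = 0) ∧ (0 < VN → 0 < g) ∧ (VN < 0 → g < 0) := by
  intro a b c g
  have ha : a < 0 := by simp only [a]; linarith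
  have hc : 0 < c := by simp only [c]; positivity
  have hd : 0 ≤ b ^ 2 - a * c :=
    discrim_nonneg_of_mul_nonpos (mul_nonpos_of_nonpos_of_nonneg ha.le hc.le)
  have ht : 0 < posRoot a b c := posRoot_pos ha hc
  have hg : g = VN * posRoot a b c := rfl
  rw [hg]
  exact ⟨hd, mul_div_sqrt_eq_of_quadratic hu ht (posRoot_isRoot ha.ne hd),
    mul_eq_zero.trans (or_iff_left ht.ne'), fun h => mul_pos h ht,
    fun h => mul_neg_of_neg_of_pos h ht⟩
end

section
/- Consider the system ψ̃̇ = C(t) r̃, r̃̇ = -k₁ r̃ - k₂ C(t) ψ̃ where k₁, k₂ > 0 and C : ℝ≥0 → ℝ is continuously differentiable with 0 < c₁ ≤ C(t) ≤ c₂ and |Ċ(t)| bounded. Then the origin (ψ̃, r̃) = (0,0) is globally asymptotically stable; moreover with V = ½ r̃² + ½ k₂ ψ̃², V̇ = -k₁ r̃² ≤ 0 along solutions and every solution satisfies r̃(t) → 0 and ψ̃(t) → 0 as t → ∞. -/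
/-!
Along solutions, `V = ½ r² + ½ k₂ ψ²` satisfies `V̇ = -k₁ r² ≤ 0`, so `V` converges and `r`, `ψ`
stay bounded. Barbalat's lemma (a convergent function whose derivative is Lipschitz on a half-line
has derivative tending to `0`) applied to `V`, whose second derivative is bounded, gives `r → 0`.
Applied again to `r`, whose second derivative is bounded because `Ċ` is, it gives `ṙ → 0`.
Hence `k₂ C ψ = -k₁ r - ṙ → 0`, and `C ≥ c₁ > 0` forces `ψ → 0`.
-/

open Real Filter Topology Set Asymptotics
open scoped NNReal

section Barbalat

variable {f f' f'' : ℝ → ℝ} {K : ℝ≥0} {a : ℝ}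

theorem abs_deriv_le_of_lipschitzOnWith (hf : ∀ t, HasDerivAt f (f' t) t)
    (hlip : LipschitzOnWith K f' (Ici a)) {t δ : ℝ} (ht : a ≤ t) (hδ : 0 < δ) :
    |f' t| ≤ |f (t + δ) - f t| / δ + K * δ := by
  obtain ⟨c, ⟨htc, hct⟩, hc⟩ := exists_hasDerivAt_eq_slope f f' (lt_add_of_pos_right t hδ)
    (fun x _ => (hf x).continuousAt.continuousWithinAt) (fun x _ => hf x)
  rw [add_sub_cancel_left] at hc
  have hclose : |f' t - f' c| ≤ K * δ := by
    have := hlip.dist_le_mul t ht c (ht.trans htc.le)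
    rw [Real.dist_eq, Real.dist_eq, abs_sub_comm t, abs_of_pos (sub_pos.2 htc)] at this
    exact this.trans (by gcongr; linarith)
  calc |f' t| ≤ |f' c| + K * δ := by linarith [abs_sub_abs_le_abs_sub (f' t) (f' c)]
    _ = |f (t + δ) - f t| / δ + K * δ := by rw [hc, abs_div, abs_of_pos hδ]

/-- Barbalat's lemma. -/
theorem tendsto_deriv_zero_of_lipschitzOnWith (hf : ∀ t, HasDerivAt f (f' t) t)
    (hlip : LipschitzOnWith K f' (Ici a)) {L : ℝ} (hL : Tendsto f atTop (𝓝 L)) :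
    Tendsto f' atTop (𝓝 0) := by
  rw [Metric.tendsto_nhds]
  intro ε hε
  set δ := ε / (2 * (K + 1)) with hδ_def
  have hδ : 0 < δ := by positivity
  have hinc : Tendsto (fun t => f (t + δ) - f t) atTop (𝓝 0) := by
    simpa using (hL.comp (tendsto_atTop_add_const_right _ δ tendsto_id)).sub hL
  filter_upwards [(Metric.tendsto_nhds.1 hinc) (ε / 2 * δ) (by positivity),
    eventually_ge_atTop a] with t hsmall ht
  rw [Real.dist_0_eq_abs] at hsmall ⊢
  have hKδ : K * δ < ε / 2 := by
    rw [hδ_def, mul_div_assoc', div_lt_iff₀ (by positivity)]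
    nlinarith [K.2]
  calc |f' t| ≤ |f (t + δ) - f t| / δ + K * δ := abs_deriv_le_of_lipschitzOnWith hf hlip ht hδ
    _ < ε / 2 + ε / 2 := add_lt_add ((div_lt_iff₀ hδ).2 hsmall) hKδ
    _ = ε := add_halves ε

theorem tendsto_deriv_zero_of_boundedAtFilter_deriv (hf : ∀ t, HasDerivAt f (f' t) t)
    (hf' : ∀ t, HasDerivAt f' (f'' t) t) (hbdd : BoundedAtFilter atTop f'')
    {L : ℝ} (hL : Tendsto f atTop (𝓝 L)) : Tendsto f' atTop (𝓝 0) := by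
  obtain ⟨M, hM, hbound⟩ := hbdd.exists_nonneg
  obtain ⟨a, ha⟩ := eventually_atTop.1 hbound.bound
  have hlip : LipschitzOnWith ⟨M, hM⟩ f' (Ici a) :=
    (convex_Ici a).lipschitzOnWith_of_nnnorm_hasDerivWithin_le
      (fun t _ => (hf' t).hasDerivWithinAt) fun t ht =>
        NNReal.coe_le_coe.1 (by simpa using ha t ht : |f'' t| ≤ M)
  exact tendsto_deriv_zero_of_lipschitzOnWith hf hlip hL

end Barbalat

theorem boundedAtFilter_of_eventually_abs_le {α : Type*} {l : Filter α} {f : α → ℝ} {M : ℝ}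
    (h : ∀ᶠ x in l, |f x| ≤ M) : BoundedAtFilter l f :=
  (isBigO_one_iff ℝ).2 ⟨M, h⟩

section YawDynamics

variable {k₁ k₂ : ℝ} {C C' ψ r : ℝ → ℝ}

noncomputable def yawLyapunov (k₂ : ℝ) (ψ r : ℝ → ℝ) (t : ℝ) : ℝ :=
  1 / 2 * r t ^ 2 + 1 / 2 * k₂ * ψ t ^ 2

theorem hasDerivAt_yawLyapunov {t : ℝ} (hψ : HasDerivAt ψ (C t * r t) t)
    (hr : HasDerivAt r (-k₁ * r t - k₂ * C t * ψ t) t) :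
    HasDerivAt (yawLyapunov k₂ ψ r) (-k₁ * r t ^ 2) t := by
  refine (((hr.pow 2).const_mul (1 / 2)).add ((hψ.pow 2).const_mul (1 / 2 * k₂))).congr_deriv ?_
  push_cast
  ring

theorem antitone_yawLyapunov (hk₁ : 0 ≤ k₁) (hψ : ∀ t, HasDerivAt ψ (C t * r t) t)
    (hr : ∀ t, HasDerivAt r (-k₁ * r t - k₂ * C t * ψ t) t) :
    Antitone (yawLyapunov k₂ ψ r) :=
  antitone_of_hasDerivAt_nonpos (fun t => hasDerivAt_yawLyapunov (hψ t) (hr t))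
    fun t => show -k₁ * r t ^ 2 ≤ 0 by nlinarith [sq_nonneg (r t)]

theorem yawLyapunov_nonneg (hk₂ : 0 ≤ k₂) (t : ℝ) : 0 ≤ yawLyapunov k₂ ψ r t := by
  unfold yawLyapunov; positivity

theorem tendsto_yawLyapunov (hk₂ : 0 ≤ k₂) (hV : Antitone (yawLyapunov k₂ ψ r)) :
    ∃ L, Tendsto (yawLyapunov k₂ ψ r) atTop (𝓝 L) :=
  ⟨_, tendsto_atTop_ciInf hV ⟨0, by rintro _ ⟨t, rfl⟩; exact yawLyapunov_nonneg hk₂ t⟩⟩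

theorem boundedAtFilter_rate (hk₂ : 0 ≤ k₂) (hV : Antitone (yawLyapunov k₂ ψ r)) :
    BoundedAtFilter atTop r := by
  refine boundedAtFilter_of_eventually_abs_le (M := √(2 * yawLyapunov k₂ ψ r 0)) ?_
  filter_upwards [eventually_ge_atTop 0] with t ht
  refine abs_le_sqrt ?_
  have := hV ht
  unfold yawLyapunov at this ⊢
  nlinarith [mul_nonneg hk₂ (sq_nonneg (ψ t))]

theorem boundedAtFilter_angle (hk₂ : 0 < k₂) (hV : Antitone (yawLyapunov k₂ ψ r)) :
    BoundedAtFilter atTop ψ := by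
  refine boundedAtFilter_of_eventually_abs_le (M := √(2 * yawLyapunov k₂ ψ r 0 / k₂)) ?_
  filter_upwards [eventually_ge_atTop 0] with t ht
  refine abs_le_sqrt ?_
  have := hV ht
  unfold yawLyapunov at this ⊢
  rw [le_div_iff₀ hk₂]
  nlinarith [sq_nonneg (r t)]

theorem boundedAtFilter_rate_deriv (hk₁ : 0 ≤ k₁) (hk₂ : 0 < k₂) (hCB : BoundedAtFilter atTop C)
    (hψ : ∀ t, HasDerivAt ψ (C t * r t) t)
    (hr : ∀ t, HasDerivAt r (-k₁ * r t - k₂ * C t * ψ t) t) :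
    BoundedAtFilter atTop fun t => -k₁ * r t - k₂ * C t * ψ t :=
  have hV := antitone_yawLyapunov hk₁ hψ hr
  ((boundedAtFilter_rate hk₂.le hV).const_mul_left (-k₁)).sub
    (BoundedAtFilter.mul (hCB.const_mul_left k₂) (boundedAtFilter_angle hk₂ hV))

theorem tendsto_rate_zero (hk₁ : 0 < k₁) (hk₂ : 0 < k₂) (hCB : BoundedAtFilter atTop C)
    (hψ : ∀ t, HasDerivAt ψ (C t * r t) t)
    (hr : ∀ t, HasDerivAt r (-k₁ * r t - k₂ * C t * ψ t) t) :
    Tendsto r atTop (𝓝 0) := by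
  have hV := antitone_yawLyapunov hk₁.le hψ hr
  obtain ⟨L, hL⟩ := tendsto_yawLyapunov hk₂.le hV
  have hV'' (t : ℝ) : HasDerivAt (fun s => -k₁ * r s ^ 2)
      (-2 * k₁ * r t * (-k₁ * r t - k₂ * C t * ψ t)) t :=
    (((hr t).pow 2).const_mul (-k₁)).congr_deriv (by push_cast; ring)
  have hV''B : BoundedAtFilter atTop fun t => -2 * k₁ * r t * (-k₁ * r t - k₂ * C t * ψ t) :=
    BoundedAtFilter.mul ((boundedAtFilter_rate hk₂.le hV).const_mul_left (-2 * k₁))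
      (boundedAtFilter_rate_deriv hk₁.le hk₂ hCB hψ hr)
  have hV'0 := tendsto_deriv_zero_of_boundedAtFilter_deriv
    (fun t => hasDerivAt_yawLyapunov (hψ t) (hr t)) hV'' hV''B hL
  have hr_sq : Tendsto (fun t => r t ^ 2) atTop (𝓝 0) := by
    simpa [hk₁.ne'] using hV'0.const_mul (-k₁⁻¹)
  rw [tendsto_zero_iff_norm_tendsto_zero]
  simpa [Real.sqrt_sq_eq_abs] using hr_sq.sqrt

theorem tendsto_rate_deriv_zero (hk₁ : 0 < k₁) (hk₂ : 0 < k₂) (hC : ∀ t, HasDerivAt C (C' t) t)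
    (hCB : BoundedAtFilter atTop C) (hC'B : BoundedAtFilter atTop C')
    (hψ : ∀ t, HasDerivAt ψ (C t * r t) t)
    (hr : ∀ t, HasDerivAt r (-k₁ * r t - k₂ * C t * ψ t) t) :
    Tendsto (fun t => -k₁ * r t - k₂ * C t * ψ t) atTop (𝓝 0) := by
  have hV := antitone_yawLyapunov hk₁.le hψ hr
  have hr'' (t : ℝ) : HasDerivAt (fun s => -k₁ * r s - k₂ * C s * ψ s)
      (-k₁ * (-k₁ * r t - k₂ * C t * ψ t) - k₂ * (C' t * ψ t + C t * (C t * r t))) t :=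
    (((hr t).const_mul (-k₁)).sub (((hC t).const_mul k₂).mul (hψ t))).congr_deriv (by ring)
  have hr''B : BoundedAtFilter atTop fun t =>
      -k₁ * (-k₁ * r t - k₂ * C t * ψ t) - k₂ * (C' t * ψ t + C t * (C t * r t)) :=
    ((boundedAtFilter_rate_deriv hk₁.le hk₂ hCB hψ hr).const_mul_left (-k₁)).sub
      (((BoundedAtFilter.mul hC'B (boundedAtFilter_angle hk₂ hV)).add
        (BoundedAtFilter.mul hCB (BoundedAtFilter.mul hCB
          (boundedAtFilter_rate hk₂.le hV)))).const_mul_left k₂)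
  exact tendsto_deriv_zero_of_boundedAtFilter_deriv hr hr'' hr''B
    (tendsto_rate_zero hk₁ hk₂ hCB hψ hr)

theorem tendsto_angle_zero {c₁ : ℝ} (hk₂ : 0 < k₂) (hc₁ : 0 < c₁) (hbl : ∀ t, c₁ ≤ C t)
    (hr0 : Tendsto r atTop (𝓝 0))
    (hr'0 : Tendsto (fun t => -k₁ * r t - k₂ * C t * ψ t) atTop (𝓝 0)) :
    Tendsto ψ atTop (𝓝 0) := by
  have hCψ : Tendsto (fun t => k₂ * C t * ψ t) atTop (𝓝 0) := by
    have := (hr0.const_mul (-k₁)).sub hr'0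
    rw [mul_zero, sub_zero] at this
    exact this.congr fun t => by ring
  refine squeeze_zero_norm (fun t => ?_) (by simpa using hCψ.norm.div_const (k₂ * c₁))
  rw [le_div_iff₀ (by positivity)]
  simp only [Real.norm_eq_abs, abs_of_pos hk₂, abs_of_pos (hc₁.trans_le (hbl t))]
  linarith [mul_le_mul_of_nonneg_left (hbl t) (mul_nonneg hk₂.le (abs_nonneg (ψ t)))]

end YawDynamics

/-- Global asymptotic stability of the yaw-angle/yaw-rate error dynamics with a
gain C(t) bounded above and away from zero. -/
theorem stmt_10 (k₁ k₂ c₁ c₂ : ℝ) (hk₁ : 0 < k₁) (hk₂ : 0 < k₂)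
    (C C' : ℝ → ℝ) (hC : ∀ t : ℝ, HasDerivAt C (C' t) t)
    (hc₁ : 0 < c₁) (hbl : ∀ t : ℝ, c₁ ≤ C t) (hbu : ∀ t : ℝ, C t ≤ c₂)
    (hC' : ∃ M : ℝ, ∀ t : ℝ, |C' t| ≤ M)
    (ψ r : ℝ → ℝ)
    (hψ : ∀ t : ℝ, HasDerivAt ψ (C t * r t) t)
    (hr : ∀ t : ℝ, HasDerivAt r (-k₁ * r t - k₂ * C t * ψ t) t) :
    (∀ t : ℝ, HasDerivAt (fun s => (1/2) * (r s)^2 + (1/2) * k₂ * (ψ s)^2)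
        (-k₁ * (r t)^2) t) ∧
    Tendsto r atTop (𝓝 0) ∧ Tendsto ψ atTop (𝓝 0) := by
  obtain ⟨M, hM⟩ := hC'
  have hCB : BoundedAtFilter atTop C := boundedAtFilter_of_eventually_abs_le
    (.of_forall fun t => abs_le_max_abs_abs (hbl t) (hbu t))
  have hC'B : BoundedAtFilter atTop C' := boundedAtFilter_of_eventually_abs_le (.of_forall hM)
  have hr0 := tendsto_rate_zero hk₁ hk₂ hCB hψ hr
  have hr'0 := tendsto_rate_deriv_zero hk₁ hk₂ hC hCB hC'B hψ hr
  exact ⟨fun t => hasDerivAt_yawLyapunov (hψ t) (hr t), hr0, tendsto_angle_zero hk₂ hc₁ hbl hr0 hr'0⟩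
end

section
/- Suppose C : ℝ≥0 → ℝ satisfies 0 < c₁ ≤ C(t) ≤ c₂ for all t, and (ψ̃, r̃) solves ψ̃̇ = C(t) r̃, r̃̇ = -k₁ r̃ - k₂ C(t) ψ̃ with k₁, k₂ > 0. If r̃(t) → 0 and r̃̇(t) → 0 as t → ∞ (the latter following from uniform continuity of r̃̇ and Barbalat), then ψ̃(t) → 0 as t → ∞. -/
open Real Filter Topology

theorem tendsto_zero_of_tendsto_mul_of_le_abs {α : Type*} {l : Filter α} {f g : α → ℝ} {c : ℝ}
    (hc : 0 < c) (hg : ∀ᶠ x in l, c ≤ |g x|) (h : Tendsto (fun x => g x * f x) l (𝓝 0)) :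
    Tendsto f l (𝓝 0) := by
  refine squeeze_zero_norm' ?_ ((h.abs.div_const c).trans (by simp))
  filter_upwards [hg] with x hx
  rw [Real.norm_eq_abs, le_div_iff₀ hc, abs_mul, mul_comm |g x|]
  exact mul_le_mul_of_nonneg_left hx (abs_nonneg _)

theorem stmt_19_general (k₁ k₂ c₁ : ℝ) (hk₂ : 0 < k₂)
    (hc₁ : 0 < c₁)
    (C : ℝ → ℝ) (hbl : ∀ t : ℝ, 0 ≤ t → c₁ ≤ C t)
    (ψ r : ℝ → ℝ)
    (hrlim : Tendsto r atTop (𝓝 0))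
    (hr'lim : Tendsto (fun t => -k₁ * r t - k₂ * C t * ψ t) atTop (𝓝 0)) :
    Tendsto ψ atTop (𝓝 0) := by
  have hCψ : Tendsto (fun t => k₂ * C t * ψ t) atTop (𝓝 0) := by
    simpa only [mul_zero, sub_zero, sub_sub_cancel] using (hrlim.const_mul (-k₁)).sub hr'lim
  refine tendsto_zero_of_tendsto_mul_of_le_abs (mul_pos hk₂ hc₁) ?_ hCψ
  filter_upwards [eventually_ge_atTop 0] with t ht
  calc k₂ * c₁ ≤ k₂ * C t := mul_le_mul_of_nonneg_left (hbl t ht) hk₂.le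
    _ ≤ |k₂ * C t| := le_abs_self _

/-- If r̃ and r̃̇ converge to zero along the yaw error dynamics with gain C(t)
bounded away from zero, then ψ̃ converges to zero as well. -/
theorem stmt_19 (k₁ k₂ c₁ c₂ : ℝ) (hk₁ : 0 < k₁) (hk₂ : 0 < k₂)
    (hc₁ : 0 < c₁)
    (C : ℝ → ℝ) (hbl : ∀ t : ℝ, 0 ≤ t → c₁ ≤ C t) (hbu : ∀ t : ℝ, 0 ≤ t → C t ≤ c₂)
    (ψ r : ℝ → ℝ)
    (hψ : ∀ t : ℝ, 0 ≤ t → HasDerivAt ψ (C t * r t) t)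
    (hr : ∀ t : ℝ, 0 ≤ t → HasDerivAt r (-k₁ * r t - k₂ * C t * ψ t) t)
    (hrlim : Tendsto r atTop (𝓝 0))
    (hr'lim : Tendsto (fun t => -k₁ * r t - k₂ * C t * ψ t) atTop (𝓝 0)) :
    Tendsto ψ atTop (𝓝 0) :=
  stmt_19_general k₁ k₂ c₁ hk₂ hc₁ C hbl ψ r hrlim hr'lim
end
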